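/- The following 24 words in the generators of Γ₄ are each equal to the 5×5 identity matrix: g₄g₈⁻²g₁₇⁻¹, g₃g₄²g₁₃, g₄g₆⁻¹g₁₄g₈, g₃g₁₄g₁₇⁻¹g₄⁻¹, g₃g₁₃⁻¹g₁₇g₁₀, g₄g₁₀⁻¹g₁₃⁻¹g₈⁻¹, g₃g₁₇g₁₁⁻¹g₈⁻¹, g₁g₁₁⁻¹g₁₃g₅⁻¹, g₂g₁₁⁻¹g₄g₁₄⁻¹, g₂g₁₃g₁₇⁻¹g₁₁, g₃g₅⁻¹g₆⁻¹g₄, g₁g₁₄g₃g₁₀⁻¹, g₈g₁₄⁻¹g₁₁², g₃²g₆g₁₀⁻¹, g₆g₁₃g₈g₁₁⁻¹, g₅g₁₀⁻¹g₆⁻¹g₁₃⁻¹, g₂g₁₇⁻¹g₁₀⁻¹g₅⁻¹, g₅g₁₄g₁₀², g₁g₅⁻²g₁₇, g₁g₆g₁₄⁻¹g₅, g₁g₂g₈⁻¹g₆, g₂²g₆⁻¹g₁₁⁻¹, g₁²g₁₃⁻¹g₂, g₁g₁₇⁻¹g₁₄g₂⁻¹. (These are the defining relators of the fundamental group Γ₄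 of the manifold 24c1.4, one for each of the 24 ridge cycles.) -/

import Mathlib

open Matrix

noncomputable def g1 : Matrix (Fin 5) (Fin 5) ℝ :=
  (1/2 : ℝ) • !![1, -1, -1, 1, 0; -3, -3, 1, 1, 4; -3, -3, -1, -1, 4; 1, -1, 1, -1, 0; -4, -4, 0, 0, 6]

noncomputable def g2 : Matrix (Fin 5) (Fin 5) ℝ :=
  !![0, 0, -1, 0, 0; 1, -2, 0, 0, 2; 0, 0, 0, 1, 0; -2, 1, 0, 0, -2; 2, -2, 0, 0, 3]

noncomputable def g3 : Matrix (Fin 5) (Fin 5) ℝ :=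
  !![0, 0, -1, 0, 0; 1, -2, 0, 0, -2; 0, 0, 0, 1, 0; -2, 1, 0, 0, 2; -2, 2, 0, 0, 3]

noncomputable def g4 : Matrix (Fin 5) (Fin 5) ℝ :=
  (1/2 : ℝ) • !![1, -1, -1, 1, 0; -3, -3, 1, 1, -4; -3, -3, -1, -1, -4; 1, -1, 1, -1, 0; 4, 4, 0, 0, 6]

noncomputable def g5 : Matrix (Fin 5) (Fin 5) ℝ :=
  !![0, 1, 0, 0, 0; 0, 0, 0, 1, 0; -1, 0, -2, 0, 2; 2, 0, 1, 0, -2; -2, 0, -2, 0, 3]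

noncomputable def g6 : Matrix (Fin 5) (Fin 5) ℝ :=
  (1/2 : ℝ) • !![3, -1, -3, 1, 4; -1, 1, -1, 1, 0; -3, -1, 3, 1, -4; 1, 1, 1, 1, 0; 4, 0, -4, 0, 6]

noncomputable def g8 : Matrix (Fin 5) (Fin 5) ℝ :=
  !![0, 1, 0, 0, 0; 0, 0, 0, 1, 0; -1, 0, -2, 0, -2; 2, 0, 1, 0, 2; 2, 0, 2, 0, 3]

noncomputable def g10 : Matrix (Fin 5) (Fin 5) ℝ :=
  (1/2 : ℝ) • !![-1, -1, -1, -1, 0; 1, -1, -1, 1, 0; 1, 3, -3, -1, 4; -1, 3, -3, 1, 4; 0, 4, -4, 0, 6]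

noncomputable def g11 : Matrix (Fin 5) (Fin 5) ℝ :=
  (1/2 : ℝ) • !![-1, -1, -1, -1, 0; 1, -1, -1, 1, 0; 1, 3, -3, -1, -4; -1, 3, -3, 1, -4; 0, -4, 4, 0, 6]

noncomputable def g13 : Matrix (Fin 5) (Fin 5) ℝ :=
  !![2, 0, 0, 1, -2; 0, 1, 0, 0, 0; 0, 0, -1, 0, 0; 1, 0, 0, 2, -2; -2, 0, 0, -2, 3]

noncomputable def g14 : Matrix (Fin 5) (Fin 5) ℝ :=
  !![2, 0, 0, -1, 2; 0, -1, 0, 0, 0; 0, 0, 1, 0, 0; -1, 0, 0, 2, -2; 2, 0, 0, -2, 3]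

noncomputable def g17 : Matrix (Fin 5) (Fin 5) ℝ :=
  (1/2 : ℝ) • !![1, 1, -1, -1, 0; 1, 3, 1, 3, -4; -1, 1, 1, -1, 0; -1, 3, -1, 3, -4; 0, -4, 0, -4, 6]

/-!
Every generator preserves the Lorentzian form `x₁² + x₂² + x₃² + x₄² - x₅²`, i.e. `gᵀ J g = J`
for `J = diag(1, 1, 1, 1, -1)`, so its inverse is `J gᵀ J`. This removes the inverses from the
relators; as all entries are rational, each relator then becomes an identity between products of
explicit rational matrices, which is decided by evaluation.
-/

theorem Matrix.inv_eq_mul_transpose_mul {n R : Type*} [Fintype n] [DecidableEq n] [CommRing R]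
    {J g : Matrix n n R} (hJ : J * J = 1) (hg : gᵀ * J * g = J) : g⁻¹ = J * gᵀ * J :=
  inv_eq_left_inv <| by rw [mul_assoc, mul_assoc, ← mul_assoc gᵀ, hg, hJ]

theorem RingHom.mapMatrix_inv {n K L : Type*} [Fintype n] [DecidableEq n] [Field K] [Field L]
    (f : K →+* L) (A : Matrix n n K) : f.mapMatrix A⁻¹ = (f.mapMatrix A)⁻¹ := by
  have h := f.map_adjugate A
  simp only [RingHom.mapMatrix_apply] at h
  simp [Matrix.inv_def, ← h, RingHom.map_det, Matrix.map_smul']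

theorem RingHom.mapMatrix_injective {n R S : Type*} [Fintype n] [DecidableEq n] [Semiring R]
    [Semiring S] {f : R →+* S} (hf : Function.Injective f) :
    Function.Injective (f.mapMatrix : Matrix n n R →+* Matrix n n S) :=
  Matrix.map_injective hf

def lorentzForm : Matrix (Fin 5) (Fin 5) ℚ := diagonal ![1, 1, 1, 1, -1]

theorem inv_eq_of_preserves_lorentzForm {g : Matrix (Fin 5) (Fin 5) ℚ}
    (hg : gᵀ * lorentzForm * g = lorentzForm) : g⁻¹ = lorentzForm * gᵀ * lorentzForm :=
  inv_eq_mul_transpose_mul (by decide +kernel) hg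

def g1ℚ : Matrix (Fin 5) (Fin 5) ℚ :=
  (1/2 : ℚ) • !![1, -1, -1, 1, 0; -3, -3, 1, 1, 4; -3, -3, -1, -1, 4; 1, -1, 1, -1, 0; -4, -4, 0, 0, 6]

def g2ℚ : Matrix (Fin 5) (Fin 5) ℚ :=
  !![0, 0, -1, 0, 0; 1, -2, 0, 0, 2; 0, 0, 0, 1, 0; -2, 1, 0, 0, -2; 2, -2, 0, 0, 3]

def g3ℚ : Matrix (Fin 5) (Fin 5) ℚ :=
  !![0, 0, -1, 0, 0; 1, -2, 0, 0, -2; 0, 0, 0, 1, 0; -2, 1, 0, 0, 2; -2, 2, 0, 0, 3]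

def g4ℚ : Matrix (Fin 5) (Fin 5) ℚ :=
  (1/2 : ℚ) • !![1, -1, -1, 1, 0; -3, -3, 1, 1, -4; -3, -3, -1, -1, -4; 1, -1, 1, -1, 0; 4, 4, 0, 0, 6]

def g5ℚ : Matrix (Fin 5) (Fin 5) ℚ :=
  !![0, 1, 0, 0, 0; 0, 0, 0, 1, 0; -1, 0, -2, 0, 2; 2, 0, 1, 0, -2; -2, 0, -2, 0, 3]

def g6ℚ : Matrix (Fin 5) (Fin 5) ℚ :=
  (1/2 : ℚ) • !![3, -1, -3, 1, 4; -1, 1, -1, 1, 0; -3, -1, 3, 1, -4; 1, 1, 1, 1, 0; 4, 0, -4, 0, 6]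

def g8ℚ : Matrix (Fin 5) (Fin 5) ℚ :=
  !![0, 1, 0, 0, 0; 0, 0, 0, 1, 0; -1, 0, -2, 0, -2; 2, 0, 1, 0, 2; 2, 0, 2, 0, 3]

def g10ℚ : Matrix (Fin 5) (Fin 5) ℚ :=
  (1/2 : ℚ) • !![-1, -1, -1, -1, 0; 1, -1, -1, 1, 0; 1, 3, -3, -1, 4; -1, 3, -3, 1, 4; 0, 4, -4, 0, 6]

def g11ℚ : Matrix (Fin 5) (Fin 5) ℚ :=
  (1/2 : ℚ) • !![-1, -1, -1, -1, 0; 1, -1, -1, 1, 0; 1, 3, -3, -1, -4; -1, 3, -3, 1, -4; 0, -4, 4, 0, 6]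

def g13ℚ : Matrix (Fin 5) (Fin 5) ℚ :=
  !![2, 0, 0, 1, -2; 0, 1, 0, 0, 0; 0, 0, -1, 0, 0; 1, 0, 0, 2, -2; -2, 0, 0, -2, 3]

def g14ℚ : Matrix (Fin 5) (Fin 5) ℚ :=
  !![2, 0, 0, -1, 2; 0, -1, 0, 0, 0; 0, 0, 1, 0, 0; -1, 0, 0, 2, -2; 2, 0, 0, -2, 3]

def g17ℚ : Matrix (Fin 5) (Fin 5) ℚ :=
  (1/2 : ℚ) • !![1, 1, -1, -1, 0; 1, 3, 1, 3, -4; -1, 1, 1, -1, 0; -1, 3, -1, 3, -4; 0, -4, 0, -4, 6]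

theorem mapMatrix_g1ℚ : (Rat.castHom ℝ).mapMatrix g1ℚ = g1 := by
  ext i j; fin_cases i <;> fin_cases j <;> simp [g1ℚ, g1]

theorem mapMatrix_g2ℚ : (Rat.castHom ℝ).mapMatrix g2ℚ = g2 := by
  ext i j; fin_cases i <;> fin_cases j <;> simp [g2ℚ, g2]

theorem mapMatrix_g3ℚ : (Rat.castHom ℝ).mapMatrix g3ℚ = g3 := by
  ext i j; fin_cases i <;> fin_cases j <;> simp [g3ℚ, g3]

theorem mapMatrix_g4ℚ : (Rat.castHom ℝ).mapMatrix g4ℚ = g4 := by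
  ext i j; fin_cases i <;> fin_cases j <;> simp [g4ℚ, g4]

theorem mapMatrix_g5ℚ : (Rat.castHom ℝ).mapMatrix g5ℚ = g5 := by
  ext i j; fin_cases i <;> fin_cases j <;> simp [g5ℚ, g5]

theorem mapMatrix_g6ℚ : (Rat.castHom ℝ).mapMatrix g6ℚ = g6 := by
  ext i j; fin_cases i <;> fin_cases j <;> simp [g6ℚ, g6]

theorem mapMatrix_g8ℚ : (Rat.castHom ℝ).mapMatrix g8ℚ = g8 := by
  ext i j; fin_cases i <;> fin_cases j <;> simp [g8ℚ, g8]

theorem mapMatrix_g10ℚ : (Rat.castHom ℝ).mapMatrix g10ℚ = g10 := by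
  ext i j; fin_cases i <;> fin_cases j <;> simp [g10ℚ, g10]

theorem mapMatrix_g11ℚ : (Rat.castHom ℝ).mapMatrix g11ℚ = g11 := by
  ext i j; fin_cases i <;> fin_cases j <;> simp [g11ℚ, g11]

theorem mapMatrix_g13ℚ : (Rat.castHom ℝ).mapMatrix g13ℚ = g13 := by
  ext i j; fin_cases i <;> fin_cases j <;> simp [g13ℚ, g13]

theorem mapMatrix_g14ℚ : (Rat.castHom ℝ).mapMatrix g14ℚ = g14 := by
  ext i j; fin_cases i <;> fin_cases j <;> simp [g14ℚ, g14]

theorem mapMatrix_g17ℚ : (Rat.castHom ℝ).mapMatrix g17ℚ = g17 := by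
  ext i j; fin_cases i <;> fin_cases j <;> simp [g17ℚ, g17]

theorem stmt11 :
    g4 * g8⁻¹ ^ 2 * g17⁻¹ = 1 ∧
    g3 * g4 ^ 2 * g13 = 1 ∧
    g4 * g6⁻¹ * g14 * g8 = 1 ∧
    g3 * g14 * g17⁻¹ * g4⁻¹ = 1 ∧
    g3 * g13⁻¹ * g17 * g10 = 1 ∧
    g4 * g10⁻¹ * g13⁻¹ * g8⁻¹ = 1 ∧
    g3 * g17 * g11⁻¹ * g8⁻¹ = 1 ∧
    g1 * g11⁻¹ * g13 * g5⁻¹ = 1 ∧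
    g2 * g11⁻¹ * g4 * g14⁻¹ = 1 ∧
    g2 * g13 * g17⁻¹ * g11 = 1 ∧
    g3 * g5⁻¹ * g6⁻¹ * g4 = 1 ∧
    g1 * g14 * g3 * g10⁻¹ = 1 ∧
    g8 * g14⁻¹ * g11 ^ 2 = 1 ∧
    g3 ^ 2 * g6 * g10⁻¹ = 1 ∧
    g6 * g13 * g8 * g11⁻¹ = 1 ∧
    g5 * g10⁻¹ * g6⁻¹ * g13⁻¹ = 1 ∧
    g2 * g17⁻¹ * g10⁻¹ * g5⁻¹ = 1 ∧
    g5 * g14 * g10 ^ 2 = 1 ∧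
    g1 * g5⁻¹ ^ 2 * g17 = 1 ∧
    g1 * g6 * g14⁻¹ * g5 = 1 ∧
    g1 * g2 * g8⁻¹ * g6 = 1 ∧
    g2 ^ 2 * g6⁻¹ * g11⁻¹ = 1 ∧
    g1 ^ 2 * g13⁻¹ * g2 = 1 ∧
    g1 * g17⁻¹ * g14 * g2⁻¹ = 1 := by
  simp only [← mapMatrix_g1ℚ, ← mapMatrix_g2ℚ, ← mapMatrix_g3ℚ, ← mapMatrix_g4ℚ, ← mapMatrix_g5ℚ,
    ← mapMatrix_g6ℚ, ← mapMatrix_g8ℚ, ← mapMatrix_g10ℚ, ← mapMatrix_g11ℚ, ← mapMatrix_g13ℚ,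
    ← mapMatrix_g14ℚ, ← mapMatrix_g17ℚ, ← RingHom.mapMatrix_inv, ← map_pow, ← map_mul,
    map_eq_one_iff _ (RingHom.mapMatrix_injective (Rat.castHom ℝ).injective)]
  simp (disch := decide +kernel) only [inv_eq_of_preserves_lorentzForm]
  decide +kernel
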